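/- For r > 0 define the Young–Orlicz function Θ_r(u) := exp(|u|^r) − 1. Let 0 < q < p < ∞, let (X,d) be a compact metric space, and let ξ = ξ(x,ω) be a jointly measurable random field on X with almost surely continuous sample paths such that the Luxemburg norm ‖ sup_{x∈X} |ξ(x)| ‖_{Θ_p} is finite. Then there exist a scaling function g_{p,q} and a non-negative random variable τ with ‖τ‖_{Θ_q} = 1 such that, almost surely, Δ(ξ(·,ω),δ) ≤ τ(ω) · g_{p,q}(δ) for every δ ∈ [0, diam(X)]. (Here one uses that Θ_q is weaker than Θ_p for q < p, i.e., for every v > 0, lim_{u→∞} Θ_q(uv)/Θ_p(u) = 0.) -/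

import Mathlib

open MeasureTheory Filter Set
open scoped ENNReal NNReal

/-- The modulus of continuity `Δ(f, δ)` of a function `f` on a metric space. -/
noncomputable def modCont {X : Type*} [MetricSpace X] (f : X → ℝ) (δ : ℝ) : ℝ :=
  sSup {r : ℝ | ∃ x y : X, dist x y ≤ δ ∧ r = |f x - f y|}

/-- An Orlicz (Young) function: even, convex, continuous, strictly increasing on `[0,∞)`,
vanishing at `0`, and tending to `∞` at `∞`. -/
structure IsOrliczFunction (Φ : ℝ → ℝ) : Prop where
  even : ∀ u, Φ (-u) = Φ u
  nonneg : ∀ u, 0 ≤ Φ u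
  convexOn : ConvexOn ℝ Set.univ Φ
  continuous : Continuous Φ
  strictMonoOn : StrictMonoOn Φ (Set.Ici 0)
  map_zero : Φ 0 = 0
  tendsto_atTop : Filter.Tendsto Φ Filter.atTop Filter.atTop

/-- The `Δ₂` condition: `limsup_{u→∞} Φ(2u)/Φ(u) < ∞`. -/
def OrliczDelta2 (Φ : ℝ → ℝ) : Prop :=
  ∃ C : ℝ, ∀ᶠ u in Filter.atTop, Φ (2 * u) ≤ C * Φ u

/-- The Luxemburg norm of a random variable `ζ` with respect to the Orlicz function `Φ`,
with value `∞` when `ζ` belongs to no ball of the Orlicz space. -/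
noncomputable def luxNorm {Ω : Type*} [MeasurableSpace Ω] (P : Measure Ω)
    (Φ : ℝ → ℝ) (ζ : Ω → ℝ) : ℝ≥0∞ :=
  sInf {c : ℝ≥0∞ | 0 < c ∧ c ≠ ∞ ∧
    ∫⁻ ω, ENNReal.ofReal (Φ (|ζ ω| / c.toReal)) ∂P ≤ 1}

/-- A scaling function on `[0, D]`: continuous, non-negative, nondecreasing, vanishing at `0`. -/
def IsScalingFunction (g : ℝ → ℝ) (D : ℝ) : Prop :=
  ContinuousOn g (Set.Icc 0 D) ∧ (∀ δ ∈ Set.Icc 0 D, 0 ≤ g δ) ∧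
    MonotoneOn g (Set.Icc 0 D) ∧ g 0 = 0

/-- `Ψ` is weaker than `Φ` (`Ψ << Φ`): for every `v > 0`, `Ψ(uv)/Φ(u) → 0` as `u → ∞`. -/
def OrliczWeaker (Ψ Φ : ℝ → ℝ) : Prop :=
  ∀ v : ℝ, 0 < v →
    Filter.Tendsto (fun u => Ψ (u * v) / Φ u) Filter.atTop (nhds 0)

/-- The exponential Young–Orlicz function `Θ_r(u) = exp(|u|^r) - 1`. -/
noncomputable def ThetaOrlicz (r : ℝ) (u : ℝ) : ℝ := Real.exp (|u| ^ r) - 1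

/-!
Let `h(δ, ω)` be the modulus of continuity of `ξ(·, ω)` taken over pairs from a countable dense
set `s` at distance `< δ`. It is measurable in `ω`, dominates `Δ(ξ(·, ω), δ')` for `δ' < δ`, is at
most twice `S(ω) = sup |ξ(·, ω)|`, and tends to `0` with `δ` on continuous paths. Because
`Θ_q(u v) ≤ Θ_p(u)` for large `u`, every multiple of `S` has a finite `Θ_q`-moment, so dominated
convergence yields `κ > 0` and scales `d₀ = diam X + 1`, `dₖ → 0` with
`∑ₖ E Θ_q(κ 2ᵏ h(dₖ)) ≤ 1/2`. The series then converges a.s., so the factor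
`τ = max(a₀, supₖ κ 2ᵏ h(dₖ))`, where `Θ_q(a₀) ≤ 1/2`, is a.s. finite, and `E Θ_q(τ) ≤ 1` since
`Θ_q` of a supremum is at most the sum. If `dₖ₊₁ ≤ δ < dₖ`, then
`Δ(δ) ≤ h(dₖ) ≤ τ / (κ 2ᵏ) ≤ τ g(δ)` for `g(δ) = ∑ₖ (κ 2ᵏ)⁻¹ min(1, δ / dₖ₊₁)`. Finally `τ` is
divided by its Luxemburg norm, which is positive because `τ ≥ a₀ > 0`.
-/

open Topology

section ThetaOrlicz

lemma thetaOrlicz_zero {r : ℝ} (hr : r ≠ 0) : ThetaOrlicz r 0 = 0 := by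
  simp [ThetaOrlicz, Real.zero_rpow hr]

lemma continuous_thetaOrlicz {r : ℝ} (hr : 0 ≤ r) : Continuous (ThetaOrlicz r) :=
  (Real.continuous_exp.comp (continuous_abs.rpow_const fun _ => Or.inr hr)).sub continuous_const

lemma monotoneOn_thetaOrlicz {r : ℝ} (hr : 0 ≤ r) : MonotoneOn (ThetaOrlicz r) (Ici 0) := by
  intro a ha b hb hab
  simp only [ThetaOrlicz, abs_of_nonneg (mem_Ici.1 ha), abs_of_nonneg (mem_Ici.1 hb)]
  gcongr

lemma one_lt_thetaOrlicz_one (r : ℝ) : 1 < ThetaOrlicz r 1 := by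
  simp only [ThetaOrlicz, abs_one, Real.one_rpow]
  linarith [Real.add_one_lt_exp one_ne_zero]

lemma eventually_thetaOrlicz_mul_le {p q : ℝ} (hqp : q < p) (v : ℝ) :
    ∀ᶠ u in atTop, ThetaOrlicz q (u * v) ≤ ThetaOrlicz p u := by
  filter_upwards [(tendsto_rpow_atTop (sub_pos.2 hqp)).eventually_ge_atTop (|v| ^ q),
    eventually_gt_atTop 0] with u hu hu0
  have key : |u * v| ^ q ≤ |u| ^ p := by
    rw [abs_mul, Real.mul_rpow (abs_nonneg _) (abs_nonneg _), abs_of_pos hu0,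
      show p = q + (p - q) by ring, Real.rpow_add hu0]
    gcongr
  simp only [ThetaOrlicz]
  gcongr

end ThetaOrlicz

section Luxemburg

variable {Ω : Type*} [MeasurableSpace Ω] {P : Measure Ω} {Φ : ℝ → ℝ} {ζ : Ω → ℝ}

lemma exists_lintegral_le_one_of_luxNorm_lt_top (h : luxNorm P Φ ζ < ∞) :
    ∃ c : ℝ, 0 < c ∧ ∫⁻ ω, ENNReal.ofReal (Φ (|ζ ω| / c)) ∂P ≤ 1 := by
  obtain ⟨c, ⟨hc0, hctop, hc⟩, -⟩ := sInf_lt_iff.1 h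
  exact ⟨c.toReal, ENNReal.toReal_pos hc0.ne' hctop, hc⟩

lemma luxNorm_le_one (h : ∫⁻ ω, ENNReal.ofReal (Φ |ζ ω|) ∂P ≤ 1) : luxNorm P Φ ζ ≤ 1 :=
  sInf_le ⟨one_pos, ENNReal.one_ne_top, by simpa using h⟩

lemma ofReal_div_le_luxNorm [IsProbabilityMeasure P] (hΦ : MonotoneOn Φ (Ici 0)) {a b : ℝ}
    (ha : 0 ≤ a) (hb : 0 < b) (hΦb : 1 < Φ b) (hζ : ∀ ω, a ≤ |ζ ω|) :
    ENNReal.ofReal (a / b) ≤ luxNorm P Φ ζ := by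
  refine le_sInf fun c ⟨hc0, hctop, hc⟩ => ?_
  have hc' : 0 < c.toReal := ENNReal.toReal_pos hc0.ne' hctop
  have hΦa : ENNReal.ofReal (Φ (a / c.toReal)) ≤ 1 :=
    calc ENNReal.ofReal (Φ (a / c.toReal))
        = ∫⁻ _, ENNReal.ofReal (Φ (a / c.toReal)) ∂P := by simp
      _ ≤ ∫⁻ ω, ENNReal.ofReal (Φ (|ζ ω| / c.toReal)) ∂P := lintegral_mono fun ω =>
          ENNReal.ofReal_le_ofReal <|
            hΦ (mem_Ici.2 (by positivity)) (mem_Ici.2 (by positivity)) (by gcongr; exact hζ ω)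
      _ ≤ 1 := hc
  have hab : a / c.toReal < b := by
    by_contra! h
    linarith [hΦ (mem_Ici.2 hb.le) (mem_Ici.2 (by positivity)) h, ENNReal.ofReal_le_one.1 hΦa]
  rw [← ENNReal.ofReal_toReal hctop]
  refine ENNReal.ofReal_le_ofReal ?_
  rw [div_lt_iff₀ hc'] at hab
  rw [div_le_iff₀ hb]
  linarith

def luxAdmissible (P : Measure Ω) (Φ : ℝ → ℝ) (ζ : Ω → ℝ) : Set ℝ≥0∞ :=
  {c | 0 < c ∧ c ≠ ∞ ∧ ∫⁻ ω, ENNReal.ofReal (Φ (|ζ ω| / c.toReal)) ∂P ≤ 1}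

lemma ofReal_mul_mem_luxAdmissible_iff {a : ℝ} (ha : 0 < a) {c : ℝ≥0∞} :
    ENNReal.ofReal a * c ∈ luxAdmissible P Φ ζ ↔
      c ∈ luxAdmissible P Φ (fun ω => ζ ω / a) := by
  simp [luxAdmissible, ENNReal.mul_eq_top, ha, abs_div, abs_of_pos ha,
    div_div, ENNReal.toReal_mul, ha.le]

lemma luxNorm_eq_ofReal_mul_luxNorm_div {a : ℝ} (ha : 0 < a) :
    luxNorm P Φ ζ = ENNReal.ofReal a * luxNorm P Φ (fun ω => ζ ω / a) := by
  have hk : IsUnit (ENNReal.ofReal a) :=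
    ENNReal.isUnit_iff.2 ⟨(ENNReal.ofReal_pos.2 ha).ne', ENNReal.ofReal_ne_top⟩
  have himage : luxAdmissible P Φ ζ =
      ENNReal.mulLeftOrderIso _ hk '' luxAdmissible P Φ (fun ω => ζ ω / a) := by
    ext c
    refine ⟨fun hc => ⟨c / ENNReal.ofReal a, ?_, ?_⟩, ?_⟩
    · rw [← ofReal_mul_mem_luxAdmissible_iff ha, ENNReal.mul_div_cancel hk.ne_zero
        ENNReal.ofReal_ne_top]
      exact hc
    · exact ENNReal.mul_div_cancel hk.ne_zero ENNReal.ofReal_ne_top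
    · rintro ⟨c, hc, rfl⟩
      exact (ofReal_mul_mem_luxAdmissible_iff ha).2 hc
  change sInf (luxAdmissible P Φ ζ) = _
  rw [himage, ← map_sInf]
  rfl

lemma luxNorm_div_toReal_self (h0 : luxNorm P Φ ζ ≠ 0) (htop : luxNorm P Φ ζ ≠ ∞) :
    luxNorm P Φ (fun ω => ζ ω / (luxNorm P Φ ζ).toReal) = 1 := by
  have hpos := ENNReal.toReal_pos h0 htop
  have h := luxNorm_eq_ofReal_mul_luxNorm_div (P := P) (Φ := Φ) (ζ := ζ) hpos
  rw [ENNReal.ofReal_toReal htop] at h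
  exact (ENNReal.mul_eq_left h0 htop).1 h.symm

lemma lintegral_ofReal_mul_abs_ne_top [IsFiniteMeasure P] {Ψ : ℝ → ℝ}
    (hΨ : MonotoneOn Ψ (Ici 0)) (hΨΦ : ∀ v, ∀ᶠ u in atTop, Ψ (u * v) ≤ Φ u)
    (hζ : luxNorm P Φ ζ < ∞) {c : ℝ} (hc : 0 ≤ c) :
    ∫⁻ ω, ENNReal.ofReal (Ψ (c * |ζ ω|)) ∂P ≠ ∞ := by
  obtain ⟨b, hb, hint⟩ := exists_lintegral_le_one_of_luxNorm_lt_top hζ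
  obtain ⟨U, hU⟩ := eventually_atTop.1 (hΨΦ (b * c))
  -- below the threshold `U` of `Ψ ≤ Φ`, the integrand is bounded by a constant
  have hpt : ∀ ω, ENNReal.ofReal (Ψ (c * |ζ ω|)) ≤
      ENNReal.ofReal (Φ (|ζ ω| / b)) + ENNReal.ofReal (Ψ (|U| * (b * c))) := by
    intro ω
    have hu : c * |ζ ω| = |ζ ω| / b * (b * c) := by field_simp
    rw [hu]
    rcases le_total U (|ζ ω| / b) with h | h
    · exact (ENNReal.ofReal_le_ofReal (hU _ h)).trans le_self_add
    · refine (ENNReal.ofReal_le_ofReal (hΨ (mem_Ici.2 (by positivity)) (mem_Ici.2 (by positivity))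
        ?_)).trans le_add_self
      gcongr
      exact h.trans (le_abs_self U)
  refine ne_top_of_le_ne_top ?_ (lintegral_mono hpt)
  rw [lintegral_add_right _ measurable_const, lintegral_const]
  exact ENNReal.add_ne_top.2 ⟨ne_top_of_le_ne_top ENNReal.one_ne_top hint,
    ENNReal.mul_ne_top ENNReal.ofReal_ne_top (measure_ne_top _ _)⟩

end Luxemburg

section SupOfSequence

variable {Φ : ℝ → ℝ}

lemma tendsto_ofReal_comp_nhds_zero (hΦc : Continuous Φ) (hΦ0 : Φ 0 = 0) {α : Type*}
    {l : Filter α} {u : α → ℝ} (hu : Tendsto u l (𝓝 0)) :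
    Tendsto (fun a => ENNReal.ofReal (Φ (u a))) l (𝓝 0) := by
  have h := (ENNReal.continuous_ofReal.comp hΦc).tendsto 0
  rw [Function.comp_apply, hΦ0, ENNReal.ofReal_zero] at h
  exact h.comp hu

lemma exists_pos_ofReal_le (hΦc : Continuous Φ) (hΦ0 : Φ 0 = 0) {ε : ℝ≥0∞} (hε : 0 < ε) :
    ∃ a > 0, ENNReal.ofReal (Φ a) ≤ ε := by
  have h := tendsto_ofReal_comp_nhds_zero hΦc hΦ0 (tendsto_id (x := 𝓝[>] (0 : ℝ)) |>.mono_right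
    nhdsWithin_le_nhds)
  obtain ⟨a, ha, ha0⟩ := ((h.eventually (eventually_le_nhds hε)).and self_mem_nhdsWithin).exists
  exact ⟨a, ha0, ha⟩

lemma bddAbove_range_of_tsum_ofReal_ne_top (hΦm : MonotoneOn Φ (Ici 0)) (hΦ1 : 0 < Φ 1)
    {x : ℕ → ℝ} (hx : ∀ k, 0 ≤ x k) (hsum : ∑' k, ENNReal.ofReal (Φ (x k)) ≠ ∞) :
    BddAbove (range x) := by
  have hlim := ENNReal.tendsto_atTop_zero_of_tsum_ne_top hsum
  refine (isBoundedUnder_of_eventually_le (a := 1) ?_).bddAbove_range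
  filter_upwards [hlim.eventually (gt_mem_nhds (ENNReal.ofReal_pos.2 hΦ1))] with k hk
  by_contra! h1
  exact hk.not_ge (ENNReal.ofReal_le_ofReal (hΦm (mem_Ici.2 zero_le_one) (mem_Ici.2 (hx k)) h1.le))

lemma ofReal_ciSup_le_tsum (hΦc : Continuous Φ) (hΦm : MonotoneOn Φ (Ici 0)) {x : ℕ → ℝ}
    (hx : ∀ k, 0 ≤ x k) (hbdd : BddAbove (range x)) :
    ENNReal.ofReal (Φ (⨆ k, x k)) ≤ ∑' k, ENNReal.ofReal (Φ (x k)) := by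
  -- clamping at `0` makes the map monotone on all of `ℝ` without changing it on the `x k`
  have hmono : Monotone fun u => ENNReal.ofReal (Φ (max u 0)) := fun u v huv =>
    ENNReal.ofReal_le_ofReal <| hΦm (mem_Ici.2 (le_max_right _ _)) (mem_Ici.2 (le_max_right _ _))
      (max_le_max_right 0 huv)
  have hcont : Continuous fun u => ENNReal.ofReal (Φ (max u 0)) :=
    ENNReal.continuous_ofReal.comp (hΦc.comp (continuous_id.max continuous_const))
  have h := hmono.map_ciSup_of_continuousAt hcont.continuousAt hbdd
  simp only [max_eq_left (hx _), max_eq_left (Real.iSup_nonneg hx)] at h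
  rw [h]
  exact iSup_le ENNReal.le_tsum

variable {Ω : Type*} [MeasurableSpace Ω] {P : Measure Ω} {a : ℕ → Ω → ℝ}

lemma ae_bddAbove_range_of_tsum_lintegral_ne_top (hΦc : Continuous Φ)
    (hΦm : MonotoneOn Φ (Ici 0)) (hΦ1 : 0 < Φ 1) (ha : ∀ k, Measurable (a k))
    (ha0 : ∀ k ω, 0 ≤ a k ω) (hsum : ∑' k, ∫⁻ ω, ENNReal.ofReal (Φ (a k ω)) ∂P ≠ ∞) :
    ∀ᵐ ω ∂P, BddAbove (range fun k => a k ω) := by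
  have hmeas : ∀ k, Measurable fun ω => ENNReal.ofReal (Φ (a k ω)) := fun k =>
    ENNReal.measurable_ofReal.comp (hΦc.measurable.comp (ha k))
  rw [← lintegral_tsum fun k => (hmeas k).aemeasurable] at hsum
  filter_upwards [ae_lt_top (Measurable.tsum hmeas) hsum] with ω hω
  exact bddAbove_range_of_tsum_ofReal_ne_top hΦm hΦ1 (fun k => ha0 k ω) hω.ne

lemma lintegral_ofReal_max_ciSup_le [IsProbabilityMeasure P] (hΦc : Continuous Φ)
    (hΦm : MonotoneOn Φ (Ici 0)) (ha : ∀ k, Measurable (a k)) (ha0 : ∀ k ω, 0 ≤ a k ω)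
    (hbdd : ∀ᵐ ω ∂P, BddAbove (range fun k => a k ω)) (a₀ : ℝ) :
    ∫⁻ ω, ENNReal.ofReal (Φ (max a₀ (⨆ k, a k ω))) ∂P ≤
      ENNReal.ofReal (Φ a₀) + ∑' k, ∫⁻ ω, ENNReal.ofReal (Φ (a k ω)) ∂P := by
  have hmeas : ∀ k, Measurable fun ω => ENNReal.ofReal (Φ (a k ω)) := fun k =>
    ENNReal.measurable_ofReal.comp (hΦc.measurable.comp (ha k))
  have hpt : ∀ᵐ ω ∂P, ENNReal.ofReal (Φ (max a₀ (⨆ k, a k ω))) ≤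
      ENNReal.ofReal (Φ a₀) + ∑' k, ENNReal.ofReal (Φ (a k ω)) := by
    filter_upwards [hbdd] with ω hω
    rcases le_total a₀ (⨆ k, a k ω) with h | h
    · rw [max_eq_right h]
      exact (ofReal_ciSup_le_tsum hΦc hΦm (fun k => ha0 k ω) hω).trans le_add_self
    · rw [max_eq_left h]
      exact le_self_add
  refine (lintegral_mono_ae hpt).trans_eq ?_
  rw [lintegral_add_right _ (Measurable.tsum hmeas), lintegral_const, measure_univ, mul_one,
    lintegral_tsum fun k => (hmeas k).aemeasurable]

lemma exists_ae_ge_of_tsum_lintegral_le [IsProbabilityMeasure P] (hΦc : Continuous Φ)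
    (hΦm : MonotoneOn Φ (Ici 0)) (hΦ0 : Φ 0 = 0) (hΦ1 : 1 < Φ 1) (ha : ∀ k, Measurable (a k))
    (ha0 : ∀ k ω, 0 ≤ a k ω) (hsum : ∑' k, ∫⁻ ω, ENNReal.ofReal (Φ (a k ω)) ∂P ≤ 2⁻¹) :
    ∃ τ : Ω → ℝ, Measurable τ ∧ (∀ ω, 0 ≤ τ ω) ∧ luxNorm P Φ τ ≠ 0 ∧ luxNorm P Φ τ ≤ 1 ∧
      ∀ᵐ ω ∂P, ∀ k, a k ω ≤ τ ω := by
  obtain ⟨a₀, ha₀, hΦa₀⟩ :=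
    exists_pos_ofReal_le hΦc hΦ0 (ENNReal.inv_pos.2 (ENNReal.ofNat_ne_top (n := 2)))
  have hbdd := ae_bddAbove_range_of_tsum_lintegral_ne_top hΦc hΦm (zero_lt_one.trans hΦ1) ha ha0
    (ne_top_of_le_ne_top (by simp) hsum)
  have hτa₀ : ∀ ω, a₀ ≤ max a₀ (⨆ k, a k ω) := fun ω => le_max_left _ _
  refine ⟨fun ω => max a₀ (⨆ k, a k ω), measurable_const.max (Measurable.iSup ha),
    fun ω => ha₀.le.trans (hτa₀ ω), ?_, luxNorm_le_one ?_, ?_⟩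
  · refine ((ENNReal.ofReal_pos.2 (div_pos ha₀ one_pos)).trans_le ?_).ne'
    exact ofReal_div_le_luxNorm hΦm ha₀.le one_pos hΦ1 fun ω => (hτa₀ ω).trans (le_abs_self _)
  · simp only [abs_of_nonneg (ha₀.le.trans (hτa₀ _))]
    calc _ ≤ ENNReal.ofReal (Φ a₀) + ∑' k, ∫⁻ ω, ENNReal.ofReal (Φ (a k ω)) ∂P :=
          lintegral_ofReal_max_ciSup_le hΦc hΦm ha ha0 hbdd a₀
      _ ≤ 2⁻¹ + 2⁻¹ := add_le_add hΦa₀ hsum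
      _ = 1 := ENNReal.inv_two_add_inv_two
  · filter_upwards [hbdd] with ω hω k
    exact le_max_of_le_right (le_ciSup hω k)

end SupOfSequence

lemma exists_lintegral_le_of_tendsto_zero {Ω : Type*} [MeasurableSpace Ω] {P : Measure Ω}
    {F : ℝ → Ω → ℝ≥0∞} {G : Ω → ℝ≥0∞} (hF : ∀ t, Measurable (F t))
    (hdom : ∀ᶠ t in 𝓝[>] 0, F t ≤ᵐ[P] G) (hG : ∫⁻ ω, G ω ∂P ≠ ∞)
    (hlim : ∀ᵐ ω ∂P, Tendsto (F · ω) (𝓝[>] 0) (𝓝 0)) {ε : ℝ≥0∞} (hε : 0 < ε) {r : ℝ}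
    (hr : 0 < r) : ∃ t ∈ Ioo 0 r, ∫⁻ ω, F t ω ∂P ≤ ε := by
  have h := tendsto_lintegral_filter_of_dominated_convergence G (.of_forall hF) hdom hG hlim
  rw [lintegral_zero] at h
  obtain ⟨t, ht, htr⟩ := ((h.eventually (eventually_le_nhds hε)).and (Ioo_mem_nhdsGT hr)).exists
  exact ⟨t, htr, ht⟩

section DenseModulus

variable {X : Type*} [MetricSpace X]

lemma modCont_le {f : X → ℝ} {δ c : ℝ} (hc : 0 ≤ c)
    (h : ∀ x y, dist x y ≤ δ → |f x - f y| ≤ c) : modCont f δ ≤ c :=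
  Real.sSup_le (by rintro _ ⟨x, y, hxy, rfl⟩; exact h x y hxy) hc

noncomputable def denseModulus (s : Set X) (f : X → ℝ) (δ : ℝ) : ℝ :=
  ⨆ z : s × s, if dist (z.1 : X) z.2 < δ then |f z.1 - f z.2| else 0

lemma denseModulus_nonneg (s : Set X) (f : X → ℝ) (δ : ℝ) : 0 ≤ denseModulus s f δ :=
  Real.iSup_nonneg fun _ => by split_ifs <;> positivity

lemma denseModulus_le {s : Set X} {f : X → ℝ} {δ c : ℝ} (hc : 0 ≤ c)
    (h : ∀ x y, dist x y < δ → |f x - f y| ≤ c) : denseModulus s f δ ≤ c :=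
  Real.iSup_le (fun z => by split_ifs with hz; exacts [h _ _ hz, hc]) hc

lemma abs_sub_le_two_mul_iSup [CompactSpace X] {f : X → ℝ} (hf : Continuous f) (x y : X) :
    |f x - f y| ≤ 2 * ⨆ x, |f x| := by
  have hbdd : BddAbove (range fun x => |f x|) := (isCompact_range (by fun_prop)).bddAbove
  linarith [abs_sub (f x) (f y), le_ciSup hbdd x, le_ciSup hbdd y]

lemma denseModulus_le_two_mul_iSup [CompactSpace X] {f : X → ℝ} (hf : Continuous f) (s : Set X)
    (δ : ℝ) : denseModulus s f δ ≤ 2 * ⨆ x, |f x| :=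
  denseModulus_le (by positivity [Real.iSup_nonneg fun x => abs_nonneg (f x)])
    fun x y _ => abs_sub_le_two_mul_iSup hf x y

lemma abs_sub_le_denseModulus [CompactSpace X] {s : Set X} (hs : Dense s) {f : X → ℝ}
    (hf : Continuous f) {δ : ℝ} {x y : X} (hxy : dist x y < δ) :
    |f x - f y| ≤ denseModulus s f δ := by
  have hbdd : BddAbove (range fun z : s × s =>
      if dist (z.1 : X) z.2 < δ then |f z.1 - f z.2| else 0) := by
    refine ⟨2 * ⨆ x, |f x|, ?_⟩
    rintro _ ⟨z, rfl⟩
    dsimp only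
    split_ifs
    exacts [abs_sub_le_two_mul_iSup hf _ _,
      (abs_nonneg _).trans (abs_sub_le_two_mul_iSup hf z.1 z.1)]
  have hsub : {z : X × X | dist z.1 z.2 < δ} ∩ s ×ˢ s ⊆
      {z | |f z.1 - f z.2| ≤ denseModulus s f δ} := by
    rintro ⟨x', y'⟩ ⟨hd, hx', hy'⟩
    have h := le_ciSup hbdd (⟨x', hx'⟩, ⟨y', hy'⟩)
    rwa [if_pos (show dist x' y' < δ from hd)] at h
  exact closure_minimal hsub (isClosed_le (by fun_prop) continuous_const)
    ((hs.prod hs).open_subset_closure_inter (isOpen_lt (by fun_prop) continuous_const)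
      (show (x, y) ∈ {z : X × X | dist z.1 z.2 < δ} from hxy))

lemma tendsto_denseModulus {s : Set X} {f : X → ℝ} (hf : UniformContinuous f) :
    Tendsto (denseModulus s f) (𝓝[>] 0) (𝓝 0) := by
  rw [Metric.tendsto_nhdsWithin_nhds]
  intro ε hε
  obtain ⟨η, hη, h⟩ := Metric.uniformContinuous_iff.1 hf (ε / 2) (half_pos hε)
  refine ⟨η, hη, fun δ hδ hδη => ?_⟩
  rw [Real.dist_eq, sub_zero, abs_of_nonneg (denseModulus_nonneg s f δ)]
  rw [Real.dist_eq, sub_zero, abs_of_pos (mem_Ioi.1 hδ)] at hδη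
  refine (denseModulus_le (half_pos hε).le fun x y hxy => ?_).trans_lt (half_lt_self hε)
  simpa [Real.dist_eq] using (h (hxy.trans hδη)).le

lemma measurable_denseModulus {Ω : Type*} [MeasurableSpace Ω] {s : Set X} (hs : s.Countable)
    {ξ : X → Ω → ℝ} (hξ : ∀ x, Measurable (ξ x)) (δ : ℝ) :
    Measurable fun ω => denseModulus s (fun x => ξ x ω) δ := by
  have := hs.to_subtype
  refine Measurable.iSup fun z => ?_
  split_ifs
  · exact ((hξ _).sub (hξ _)).abs
  · exact measurable_const

end DenseModulus

section RampSeries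

noncomputable def rampSeries (w d : ℕ → ℝ) (δ : ℝ) : ℝ :=
  ∑' k, w k * min 1 (max (δ / d k) 0)

variable {w d : ℕ → ℝ}

lemma ramp_mem_Icc (t : ℝ) : min 1 (max t 0) ∈ Icc (0 : ℝ) 1 :=
  ⟨le_min zero_le_one (le_max_right _ _), min_le_left _ _⟩

lemma summable_rampSeries (hw : ∀ k, 0 ≤ w k) (hws : Summable w) (δ : ℝ) :
    Summable fun k => w k * min 1 (max (δ / d k) 0) :=
  .of_nonneg_of_le (fun k => mul_nonneg (hw k) (ramp_mem_Icc _).1)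
    (fun k => mul_le_of_le_one_right (hw k) (ramp_mem_Icc _).2) hws

lemma rampSeries_nonneg (hw : ∀ k, 0 ≤ w k) (δ : ℝ) : 0 ≤ rampSeries w d δ :=
  tsum_nonneg fun k => mul_nonneg (hw k) (ramp_mem_Icc _).1

lemma le_rampSeries (hw : ∀ k, 0 ≤ w k) (hws : Summable w) {k : ℕ} (hdk : 0 < d k) {δ : ℝ}
    (hδ : d k ≤ δ) : w k ≤ rampSeries w d δ := by
  have h1 : 1 ≤ δ / d k := (one_le_div hdk).2 hδ
  have h := (summable_rampSeries (d := d) hw hws δ).le_tsum k fun j _ =>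
    mul_nonneg (hw j) (ramp_mem_Icc _).1
  rwa [max_eq_left (zero_le_one.trans h1), min_eq_left h1, mul_one] at h

lemma isScalingFunction_rampSeries (hw : ∀ k, 0 ≤ w k) (hws : Summable w) (hd : ∀ k, 0 < d k)
    (D : ℝ) : IsScalingFunction (rampSeries w d) D := by
  refine ⟨?_, fun δ _ => rampSeries_nonneg hw δ, ?_, ?_⟩
  · refine (continuous_tsum (fun k => by fun_prop) hws fun k δ => ?_).continuousOn
    rw [Real.norm_eq_abs, abs_of_nonneg (mul_nonneg (hw k) (ramp_mem_Icc _).1)]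
    exact mul_le_of_le_one_right (hw k) (ramp_mem_Icc _).2
  · intro a _ b _ hab
    refine (summable_rampSeries hw hws a).tsum_le_tsum (fun k => ?_)
      (summable_rampSeries hw hws b)
    exact mul_le_mul_of_nonneg_left (min_le_min_left _ (max_le_max_right _
      (div_le_div_of_nonneg_right hab (hd k).le))) (hw k)
  · simp [rampSeries]

end RampSeries

lemma exists_succ_le_lt {d : ℕ → ℝ} {δ : ℝ} (h0 : δ < d 0) (h : ∃ n, d n ≤ δ) :
    ∃ k, d (k + 1) ≤ δ ∧ δ < d k := by
  by_contra! H
  obtain ⟨n, hn⟩ := h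
  have hlt : ∀ k, δ < d k := fun k => by
    induction k with
    | zero => exact h0
    | succ k ih => exact lt_of_not_ge fun hk => (H k hk).not_gt ih
  exact (hlt n).not_ge hn

lemma modCont_le_mul_rampSeries {X : Type*} [MetricSpace X] [CompactSpace X] {s : Set X}
    (hs : Dense s) {f : X → ℝ} (hf : Continuous f) {c d : ℕ → ℝ} (hc : ∀ k, 0 < c k)
    (hcs : Summable fun k => (c k)⁻¹) (hd : ∀ k, 0 < d k) (hd_lim : ∀ δ > 0, ∃ k, d k ≤ δ)
    {t : ℝ} (ht : ∀ k, c k * denseModulus s f (d k) ≤ t) {δ : ℝ} (hδ : δ ∈ Ico 0 (d 0)) :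
    modCont f δ ≤ t * rampSeries (fun k => (c k)⁻¹) (fun k => d (k + 1)) δ := by
  have hw : ∀ k, 0 ≤ (c k)⁻¹ := fun k => (inv_pos.2 (hc k)).le
  have ht0 : 0 ≤ t := (mul_nonneg (hc 0).le (denseModulus_nonneg s f (d 0))).trans (ht 0)
  have hg0 : 0 ≤ t * rampSeries (fun k => (c k)⁻¹) (fun k => d (k + 1)) δ :=
    mul_nonneg ht0 (rampSeries_nonneg hw δ)
  refine modCont_le hg0 fun x y hxy => ?_
  rcases hδ.1.eq_or_lt with rfl | hδ0
  · rwa [dist_le_zero.1 hxy, sub_self, abs_zero]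
  obtain ⟨k, hk1, hk⟩ := exists_succ_le_lt hδ.2 (hd_lim δ hδ0)
  calc |f x - f y| ≤ denseModulus s f (d k) := abs_sub_le_denseModulus hs hf (hxy.trans_lt hk)
    _ ≤ t * (c k)⁻¹ := by rw [le_mul_inv_iff₀ (hc k), mul_comm]; exact ht k
    _ ≤ t * rampSeries (fun k => (c k)⁻¹) (fun k => d (k + 1)) δ :=
      mul_le_mul_of_nonneg_left (le_rampSeries (d := fun k => d (k + 1)) hw hcs (hd _) hk1) ht0

section RandomField

variable {X Ω : Type*} [MetricSpace X] [CompactSpace X] [MeasurableSpace Ω] {P : Measure Ω}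
  {Φ : ℝ → ℝ} {s : Set X} {ξ : X → Ω → ℝ}

lemma ae_ofReal_comp_mul_denseModulus_le (hΦm : MonotoneOn Φ (Ici 0))
    (hcont : ∀ᵐ ω ∂P, Continuous fun x => ξ x ω) {c c' : ℝ} (hc : 0 ≤ c) (hcc' : c ≤ c')
    (δ : ℝ) : ∀ᵐ ω ∂P, ENNReal.ofReal (Φ (c * denseModulus s (fun x => ξ x ω) δ)) ≤
      ENNReal.ofReal (Φ (2 * c' * |(⨆ x, |ξ x ω|)|)) := by
  filter_upwards [hcont] with ω hω
  have h0 := denseModulus_nonneg s (fun x => ξ x ω) δ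
  have h1 := denseModulus_le_two_mul_iSup hω s δ
  refine ENNReal.ofReal_le_ofReal (hΦm (mem_Ici.2 (mul_nonneg hc h0))
    (mem_Ici.2 (by positivity [hc.trans hcc'])) ?_)
  rw [abs_of_nonneg (Real.iSup_nonneg fun x => abs_nonneg (ξ x ω)), mul_comm 2 c', mul_assoc]
  exact mul_le_mul hcc' h1 h0 (hc.trans hcc')

lemma ae_tendsto_ofReal_comp_mul_denseModulus (hΦc : Continuous Φ) (hΦ0 : Φ 0 = 0)
    (hcont : ∀ᵐ ω ∂P, Continuous fun x => ξ x ω) (c : ℝ) : ∀ᵐ ω ∂P,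
      Tendsto (fun δ => ENNReal.ofReal (Φ (c * denseModulus s (fun x => ξ x ω) δ)))
        (𝓝[>] 0) (𝓝 0) := by
  filter_upwards [hcont] with ω hω
  refine tendsto_ofReal_comp_nhds_zero hΦc hΦ0 ?_
  simpa using (tendsto_denseModulus (CompactSpace.uniformContinuous_of_continuous hω)).const_mul c

lemma exists_scales (hΦc : Continuous Φ) (hΦm : MonotoneOn Φ (Ici 0)) (hΦ0 : Φ 0 = 0)
    (hs : s.Countable) (hξ : ∀ x, Measurable (ξ x)) (hcont : ∀ᵐ ω ∂P, Continuous fun x => ξ x ω)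
    (hsup : ∀ c, 0 ≤ c → ∫⁻ ω, ENNReal.ofReal (Φ (c * |(⨆ x, |ξ x ω|)|)) ∂P ≠ ∞)
    {d₀ : ℝ} (hd₀ : 0 < d₀) {ε : ℝ≥0∞} (hε : 0 < ε) :
    ∃ κ > 0, ∃ d : ℕ → ℝ, d 0 = d₀ ∧ (∀ k, 0 < d k) ∧ (∀ δ > 0, ∃ k, d k ≤ δ) ∧
      ∑' k, ∫⁻ ω, ENNReal.ofReal (Φ (κ * 2 ^ k * denseModulus s (fun x => ξ x ω) (d k))) ∂P
        ≤ ε := by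
  set h : ℝ → Ω → ℝ := fun δ ω => denseModulus s (fun x => ξ x ω) δ
  have hmeas : ∀ c δ, Measurable fun ω => ENNReal.ofReal (Φ (c * h δ ω)) := fun c δ =>
    ENNReal.measurable_ofReal.comp (hΦc.measurable.comp
      ((measurable_denseModulus hs hξ δ).const_mul c))
  obtain ⟨κ, ⟨hκ0, -⟩, hκ⟩ := exists_lintegral_le_of_tendsto_zero
    (F := fun t ω => ENNReal.ofReal (Φ (t * h d₀ ω))) (fun t => by simpa using hmeas t d₀)
    (mem_of_superset (Ioo_mem_nhdsGT one_pos) fun t ht =>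
      ae_ofReal_comp_mul_denseModulus_le hΦm hcont ht.1.le ht.2.le d₀)
    (hsup _ (by norm_num)) (.of_forall fun ω => tendsto_ofReal_comp_nhds_zero hΦc hΦ0 <| by
      simpa using ((tendsto_id (x := 𝓝 (0 : ℝ))).mul_const (h d₀ ω)).mono_left nhdsWithin_le_nhds)
    (ε := ε * 2⁻¹) (ENNReal.mul_pos hε.ne' (by norm_num)) one_pos
  have hsel : ∀ k : ℕ, ∃ δ ∈ Ioo 0 (1 / ((k : ℝ) + 1)),
      ∫⁻ ω, ENNReal.ofReal (Φ (κ * 2 ^ (k + 1) * h δ ω)) ∂P ≤ ε * 2⁻¹ ^ (k + 2) := fun k =>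
    exists_lintegral_le_of_tendsto_zero (hmeas _)
      (.of_forall (ae_ofReal_comp_mul_denseModulus_le hΦm hcont (by positivity) le_rfl))
      (hsup _ (by positivity)) (ae_tendsto_ofReal_comp_mul_denseModulus hΦc hΦ0 hcont _)
      (ENNReal.mul_pos hε.ne' (by simp)) Nat.one_div_pos_of_nat
  choose δ' hδ' hδ'ε using hsel
  refine ⟨κ, hκ0, fun k => Nat.casesOn k d₀ δ', rfl, ?_, ?_, ?_⟩
  · rintro (_ | k)
    exacts [hd₀, (hδ' k).1]
  · intro δ hδ
    obtain ⟨n, hn⟩ := exists_nat_one_div_lt hδ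
    exact ⟨n + 1, ((hδ' n).2.trans hn).le⟩
  · calc _ ≤ ∑' k : ℕ, ε * 2⁻¹ ^ (k + 1) := ENNReal.tsum_le_tsum fun k => by
          rcases k with _ | k
          · simpa using hκ
          · simpa [pow_succ] using hδ'ε k
      _ = ε := by
        rw [ENNReal.tsum_mul_left, ENNReal.tsum_geometric_add_one, ENNReal.one_sub_inv_two,
          ENNReal.mul_inv_cancel (by norm_num) (by norm_num), mul_one]

end RandomField

theorem factorable_continuity_exponential_orlicz_general
    {X Ω : Type*} [MetricSpace X] [CompactSpace X]
    [MeasurableSpace X] [MeasurableSpace Ω]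
    (P : Measure Ω) [IsProbabilityMeasure P]
    (p q : ℝ) (hq : 0 < q) (hqp : q < p)
    (ξ : X → Ω → ℝ)
    (hmeas : Measurable fun z : X × Ω => ξ z.1 z.2)
    (hcont : ∀ᵐ ω ∂P, Continuous fun x => ξ x ω)
    (hfin : luxNorm P (ThetaOrlicz p) (fun ω => ⨆ x : X, |ξ x ω|) < ∞) :
    ∃ (g : ℝ → ℝ) (τ : Ω → ℝ),
      IsScalingFunction g (Metric.diam (Set.univ : Set X)) ∧
      Measurable τ ∧ (∀ ω, 0 ≤ τ ω) ∧ luxNorm P (ThetaOrlicz q) τ = 1 ∧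
      ∀ᵐ ω ∂P, ∀ δ ∈ Set.Icc (0 : ℝ) (Metric.diam (Set.univ : Set X)),
        modCont (fun x => ξ x ω) δ ≤ τ ω * g δ := by
  obtain ⟨s, hs, hsd⟩ := TopologicalSpace.exists_countable_dense X
  have hξ : ∀ x, Measurable (ξ x) := fun x => hmeas.comp measurable_prodMk_left
  have hΘc := continuous_thetaOrlicz hq.le
  have hΘm := monotoneOn_thetaOrlicz hq.le
  have hΘ0 := thetaOrlicz_zero hq.ne'
  obtain ⟨κ, hκ, d, hd0, hd, hd_lim, hsum⟩ := exists_scales hΘc hΘm hΘ0 hs hξ hcont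
    (fun c hc => lintegral_ofReal_mul_abs_ne_top hΘm (eventually_thetaOrlicz_mul_le hqp) hfin hc)
    (d₀ := Metric.diam (univ : Set X) + 1) (by positivity)
    (ENNReal.inv_pos.2 (ENNReal.ofNat_ne_top (n := 2)))
  obtain ⟨τ, hτm, hτ0, hN0, hN1, hτ⟩ := exists_ae_ge_of_tsum_lintegral_le hΘc hΘm hΘ0
    (one_lt_thetaOrlicz_one q) (fun k => (measurable_denseModulus hs hξ _).const_mul _)
    (fun k ω => mul_nonneg (by positivity) (denseModulus_nonneg _ _ _)) hsum
  set N := luxNorm P (ThetaOrlicz q) τ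
  have hNtop : N ≠ ∞ := ne_top_of_le_ne_top ENNReal.one_ne_top hN1
  have hNr : 0 < N.toReal := ENNReal.toReal_pos hN0 hNtop
  have hw : Summable fun k => (κ * 2 ^ k / N.toReal)⁻¹ := by
    simpa [div_eq_mul_inv, mul_comm, mul_assoc] using
      summable_geometric_two.mul_left (N.toReal / κ)
  refine ⟨rampSeries (fun k => (κ * 2 ^ k / N.toReal)⁻¹) (fun k => d (k + 1)),
    fun ω => τ ω / N.toReal, isScalingFunction_rampSeries (fun k => by positivity) hw
      (fun k => hd _) _, hτm.div_const _, fun ω => div_nonneg (hτ0 ω) hNr.le,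
    luxNorm_div_toReal_self hN0 hNtop, ?_⟩
  filter_upwards [hcont, hτ] with ω hω hτω δ hδ
  refine modCont_le_mul_rampSeries hsd hω (fun k => by positivity) hw hd hd_lim (fun k => ?_)
    ⟨hδ.1, hd0 ▸ by linarith [hδ.2]⟩
  rw [div_mul_eq_mul_div]
  exact div_le_div_of_nonneg_right (hτω k) hNr.le

/-- for `0 < q < p`, a field whose supremum is in the exponential Orlicz
space `L(Θ_p)` admits a factorable modulus of continuity with factor normed in `L(Θ_q)`. -/
theorem factorable_continuity_exponential_orlicz
    {X Ω : Type*} [MetricSpace X] [CompactSpace X]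
    [MeasurableSpace X] [BorelSpace X] [MeasurableSpace Ω]
    (P : Measure Ω) [IsProbabilityMeasure P]
    (p q : ℝ) (hq : 0 < q) (hqp : q < p)
    (ξ : X → Ω → ℝ)
    (hmeas : Measurable fun z : X × Ω => ξ z.1 z.2)
    (hcont : ∀ᵐ ω ∂P, Continuous fun x => ξ x ω)
    (hfin : luxNorm P (ThetaOrlicz p) (fun ω => ⨆ x : X, |ξ x ω|) < ∞) :
    ∃ (g : ℝ → ℝ) (τ : Ω → ℝ),
      IsScalingFunction g (Metric.diam (Set.univ : Set X)) ∧
      Measurable τ ∧ (∀ ω, 0 ≤ τ ω) ∧ luxNorm P (ThetaOrlicz q) τ = 1 ∧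
      ∀ᵐ ω ∂P, ∀ δ ∈ Set.Icc (0 : ℝ) (Metric.diam (Set.univ : Set X)),
        modCont (fun x => ξ x ω) δ ≤ τ ω * g δ :=
  factorable_continuity_exponential_orlicz_general P p q hq hqp ξ hmeas hcont hfin
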